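/- arXiv:1903.04286 — 2 statements merged into one kernel-verified Lean document; each statement's English description precedes it below -/
import Mathlib

section
/- The general position number of the Kneser graph K(6,3) equals 20. -/
namespace SimpleGraph

variable {V : Type*}

/-- `S` is a general position set of `G`: no vertex of `S` lies on a geodesic
(shortest path) between two other vertices of `S`. -/
def IsGPSet (G : SimpleGraph V) (S : Set V) : Prop :=
  ∀ ⦃u v w : V⦄, u ∈ S → v ∈ S → w ∈ S → u ≠ v → u ≠ w → v ≠ w →
    ∀ p : G.Walk u v, p.IsPath → p.length = G.dist u v → w ∉ p.support

/-- The general position number of `G`: the maximum cardinality of a general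
position set of `G`. -/
noncomputable def gpNumber (G : SimpleGraph V) : ℕ :=
  sSup {n | ∃ S : Set V, G.IsGPSet S ∧ n = S.ncard}

/-- `ρ(G)`: the maximum number of vertices in a union of pairwise independent
complete subgraphs of `G`, where complete subgraphs `Q`, `Q'` are independent
if `d_G(u,u') ≥ 2` for every `u ∈ Q` and `u' ∈ Q'`. -/
noncomputable def rho (G : SimpleGraph V) : ℕ :=
  sSup {n | ∃ 𝒬 : Finset (Finset V),
    (∀ Q ∈ 𝒬, G.IsClique (Q : Set V)) ∧
    (∀ Q ∈ 𝒬, ∀ Q' ∈ 𝒬, Q ≠ Q' → ∀ u ∈ Q, ∀ u' ∈ Q', 2 ≤ G.edist u u') ∧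
    n = (⋃ Q ∈ 𝒬, (Q : Set V)).ncard}

/-- A graph is complete multipartite iff non-adjacency is transitive. -/
def IsCompleteMultipartite' (G : SimpleGraph V) : Prop := Transitive (¬G.Adj · ·)

/-- `η(G)`: the maximum order of an induced complete multipartite subgraph of
the complement of `G`. -/
noncomputable def eta (G : SimpleGraph V) : ℕ :=
  sSup {n | ∃ B : Set V, (Gᶜ.induce B).IsCompleteMultipartite' ∧ n = B.ncard}

/-- An independent set of a graph. -/
def IsIndepSet' (G : SimpleGraph V) (S : Set V) : Prop :=
  S.Pairwise fun u v => ¬ G.Adj u v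

/-- The independence number `α(G)`. -/
noncomputable def indepNum' (G : SimpleGraph V) : ℕ :=
  sSup {n | ∃ S : Set V, G.IsIndepSet' S ∧ n = S.ncard}

end SimpleGraph

/-- The Kneser graph `K(n,k)`: vertices are the `k`-element subsets of an
`n`-element set, two vertices adjacent iff the corresponding sets are disjoint. -/
def kneserGraph (n k : ℕ) : SimpleGraph {s : Finset (Fin n) // s.card = k} where
  Adj a b := Disjoint a.1 b.1 ∧ a ≠ b
  symm := by
    refine ⟨?_⟩
    rintro a b ⟨h1, h2⟩
    exact ⟨h1.symm, h2.symm⟩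
  loopless := by
    refine ⟨?_⟩
    rintro a ⟨-, h⟩
    exact h rfl

/-! In `K(6,3)` the only neighbour of a triple is its complement, so the graph is a perfect
matching. More generally, in a disjoint union of cliques every geodesic has length at most one and
hence has no interior vertex, so the whole vertex set is in general position. -/

namespace SimpleGraph

variable {V : Type*} {G : SimpleGraph V}

lemma Walk.length_le_one_of_length_eq_dist
    (hG : ∀ ⦃x y z : V⦄, G.Adj x y → G.Adj y z → x ≠ z → G.Adj x z)
    {u v : V} (p : G.Walk u v) (hp : p.length = G.dist u v) : p.length ≤ 1 := by
  by_contra! hlen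
  obtain ⟨x, y, z, hxy, hyz, hxz, hne⟩ := p.exists_adj_adj_not_adj_ne hp (hp ▸ hlen)
  exact hxz (hG hxy hyz hne)

theorem isGPSet_of_adj_trans
    (hG : ∀ ⦃x y z : V⦄, G.Adj x y → G.Adj y z → x ≠ z → G.Adj x z) (S : Set V) :
    G.IsGPSet S := by
  intro u v w _ _ _ huv huw hvw p _ hp hw
  have hlen := p.length_le_one_of_length_eq_dist hG hp
  cases p with
  | nil => exact huv rfl
  | cons _ q =>
    cases q with
    | nil =>
      simp only [Walk.support_cons, Walk.support_nil, List.mem_cons, List.not_mem_nil,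
        or_false] at hw
      exact hw.elim (huw ·.symm) (hvw ·.symm)
    | cons _ _ => simp at hlen

theorem gpNumber_eq_card_of_isGPSet_univ [Finite V] (h : G.IsGPSet Set.univ) :
    G.gpNumber = Nat.card V := by
  refine IsGreatest.csSup_eq ⟨⟨Set.univ, h, (Set.ncard_univ V).symm⟩, ?_⟩
  rintro n ⟨S, -, rfl⟩
  exact S.ncard_le_card

end SimpleGraph

namespace kneserGraph

variable {n k : ℕ}

theorem eq_compl_of_adj (hnk : n ≤ 2 * k) {a b : {s : Finset (Fin n) // s.card = k}}
    (h : (kneserGraph n k).Adj a b) : b.1 = a.1ᶜ :=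
  Finset.eq_of_subset_of_card_le (Finset.subset_compl_iff_disjoint_left.mpr h.1) <| by
    rw [Finset.card_compl, Fintype.card_fin, a.2, b.2]
    omega

theorem eq_of_adj_of_adj (hnk : n ≤ 2 * k) {a b c : {s : Finset (Fin n) // s.card = k}}
    (hab : (kneserGraph n k).Adj a b) (hbc : (kneserGraph n k).Adj b c) : a = c :=
  Subtype.ext <| (eq_compl_of_adj hnk hab.symm).trans (eq_compl_of_adj hnk hbc).symm

theorem gpNumber_eq_choose (hnk : n ≤ 2 * k) : (kneserGraph n k).gpNumber = n.choose k := by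
  have hgp : (kneserGraph n k).IsGPSet Set.univ :=
    SimpleGraph.isGPSet_of_adj_trans
      (fun _ _ _ hab hbc hac ↦ (hac (eq_of_adj_of_adj hnk hab hbc)).elim) _
  rw [SimpleGraph.gpNumber_eq_card_of_isGPSet_univ hgp, Nat.card_eq_fintype_card,
    Fintype.card_finset_len, Fintype.card_fin]

end kneserGraph

/-- The general position number of the Kneser graph `K(6,3)` equals `20`. -/
theorem gpNumber_kneserGraph_six_three : (kneserGraph 6 3).gpNumber = 20 :=
  kneserGraph.gpNumber_eq_choose (by norm_num)
end

section
/- If n_1 ≥ 2 and n_2 ≥ 2 are integers, then η(K_{n_1} □ K_{n_2}) = n_1 + n_2 − 2, i.e., the maximum order of an induced complete multipartite subgraph of the complement of K_{n_1} □ K_{n_2} equals n_1 + n_2 − 2. -/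
/-!
In the complement of `K_{n₁} □ K_{n₂}` two vertices are non-adjacent exactly when they share a
row or a column, so a vertex set `B` induces a complete multipartite graph iff sharing a line is
transitive on `B`. Then no point of `B` has both a row-mate and a column-mate in `B`, so
labelling each point by its row when it is alone there, and by its column otherwise, is injective
into the `n₁ + n₂` lines. If `B` has two points in one row and two in one column, that
row and that column are never labels; otherwise `B` injects into the columns or into the rows.
Either way `|B| ≤ n₁ + n₂ - 2`, attained by a row and a column through a point, minus the point.
-/

namespace SimpleGraph

variable {α β : Type*}

theorem compl_boxProd_top_adj {u v : α × β} :
    ((⊤ : SimpleGraph α) □ (⊤ : SimpleGraph β))ᶜ.Adj u v ↔ u.1 ≠ v.1 ∧ u.2 ≠ v.2 := by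
  simp only [compl_adj, boxProd_adj, top_adj, ne_eq, Prod.ext_iff]
  tauto

def OnCommonLine (u v : α × β) : Prop := u.1 = v.1 ∨ u.2 = v.2

def IsLineTransitive (B : Set (α × β)) : Prop :=
  ∀ ⦃u⦄, u ∈ B → ∀ ⦃v⦄, v ∈ B → ∀ ⦃w⦄, w ∈ B →
    OnCommonLine u v → OnCommonLine v w → OnCommonLine u w

theorem isCompleteMultipartite'_induce_compl_boxProd_top_iff {B : Set (α × β)} :
    (((⊤ : SimpleGraph α) □ (⊤ : SimpleGraph β))ᶜ.induce B).IsCompleteMultipartite' ↔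
      IsLineTransitive B := by
  have hnadj : ∀ x y : B, ¬(((⊤ : SimpleGraph α) □ (⊤ : SimpleGraph β))ᶜ.induce B).Adj x y ↔
      OnCommonLine x.1 y.1 := fun x y => by
    rw [comap_adj, compl_boxProd_top_adj, OnCommonLine]
    tauto
  refine ⟨fun h u hu v hv w hw huv hvw => ?_, fun h x y z hxy hyz => ?_⟩
  · exact (hnadj ⟨u, hu⟩ ⟨w, hw⟩).1
      (h ((hnadj ⟨u, hu⟩ ⟨v, hv⟩).2 huv) ((hnadj ⟨v, hv⟩ ⟨w, hw⟩).2 hvw))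
  · exact (hnadj x z).2 (h x.2 y.2 z.2 ((hnadj x y).1 hxy) ((hnadj y z).1 hyz))

open Classical in
noncomputable def lineLabel (B : Set (α × β)) (p : α × β) : α ⊕ β :=
  if ∃ q ∈ B, q ≠ p ∧ q.1 = p.1 then .inr p.2 else .inl p.1

theorem lineLabel_ne_inl {B : Set (α × β)} {u v : α × β} (hu : u ∈ B) (hv : v ∈ B) (huv : u ≠ v)
    (h₁ : u.1 = v.1) (p : α × β) : lineLabel B p ≠ .inl u.1 := by
  unfold lineLabel
  split_ifs with hp
  · exact Sum.inr_ne_inl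
  · intro hpu
    have hp₁ : p.1 = u.1 := Sum.inl_injective hpu
    by_cases hup : u = p
    · subst hup
      exact hp ⟨v, hv, huv.symm, h₁.symm⟩
    · exact hp ⟨u, hu, hup, hp₁.symm⟩

namespace IsLineTransitive

variable {B : Set (α × β)}

theorem eq_of_rowMate_of_colMate (hB : IsLineTransitive B) {p q r : α × β} (hp : p ∈ B)
    (hq : q ∈ B) (hr : r ∈ B) (hq₁ : q.1 = p.1) (hr₂ : r.2 = p.2) : q = p ∨ r = p := by
  rcases hB hq hp hr (.inl hq₁) (.inr hr₂.symm) with h | h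
  · exact .inr (Prod.ext (h ▸ hq₁) hr₂)
  · exact .inl (Prod.ext hq₁ (h.trans hr₂))

theorem injOn_lineLabel (hB : IsLineTransitive B) : Set.InjOn (lineLabel B) B := by
  intro p hp q hq hpq
  unfold lineLabel at hpq
  split_ifs at hpq with hp' hq' hq'
  · obtain ⟨p', hp'B, hp'p, hp'₁⟩ := hp'
    by_contra hpq'
    rcases hB.eq_of_rowMate_of_colMate hp hp'B hq hp'₁ (Sum.inr_injective hpq).symm with h | h
    exacts [hp'p h, hpq' h.symm]
  · by_contra hpq'
    exact hp' ⟨q, hq, Ne.symm hpq', (Sum.inl_injective hpq).symm⟩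

theorem lineLabel_ne_inr (hB : IsLineTransitive B) {u v : α × β} (hu : u ∈ B) (hv : v ∈ B)
    (huv : u ≠ v) (h₂ : u.2 = v.2) {p : α × β} (hp : p ∈ B) :
    lineLabel B p ≠ .inr u.2 := by
  unfold lineLabel
  split_ifs with hp'
  · intro hpu
    obtain ⟨q, hq, hqp, hq₁⟩ := hp'
    have hp₂ : p.2 = u.2 := Sum.inr_injective hpu
    by_cases hup : u = p
    · rcases hB.eq_of_rowMate_of_colMate hp hq hv hq₁ (h₂ ▸ hp₂).symm with h | h
      exacts [hqp h, huv (hup.trans h.symm)]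
    · rcases hB.eq_of_rowMate_of_colMate hp hq hu hq₁ hp₂.symm with h | h
      exacts [hqp h, hup h]
  · exact Sum.inl_ne_inr

theorem ncard_le [Finite α] [Finite β] (hB : IsLineTransitive B) (hα : 2 ≤ Nat.card α)
    (hβ : 2 ≤ Nat.card β) : B.ncard ≤ Nat.card α + Nat.card β - 2 := by
  by_cases hrow : Set.InjOn Prod.fst B
  · calc B.ncard = (Prod.fst '' B).ncard := hrow.ncard_image.symm
      _ ≤ Nat.card α := Set.ncard_le_card _
      _ ≤ Nat.card α + Nat.card β - 2 := by omega
  by_cases hcol : Set.InjOn Prod.snd B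
  · calc B.ncard = (Prod.snd '' B).ncard := hcol.ncard_image.symm
      _ ≤ Nat.card β := Set.ncard_le_card _
      _ ≤ Nat.card α + Nat.card β - 2 := by omega
  obtain ⟨u, hu, v, hv, h₁, huv⟩ : ∃ u ∈ B, ∃ v ∈ B, u.1 = v.1 ∧ u ≠ v := by
    simpa [Set.InjOn] using hrow
  obtain ⟨u', hu', v', hv', h₂, huv'⟩ : ∃ u ∈ B, ∃ v ∈ B, u.2 = v.2 ∧ u ≠ v := by
    simpa [Set.InjOn] using hcol
  have hmaps : ∀ p ∈ B, lineLabel B p ∈ ({.inl u.1, .inr u'.2}ᶜ : Set (α ⊕ β)) := fun p hp => by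
    simp [lineLabel_ne_inl hu hv huv h₁ p, hB.lineLabel_ne_inr hu' hv' huv' h₂ hp]
  calc B.ncard ≤ ({.inl u.1, .inr u'.2}ᶜ : Set (α ⊕ β)).ncard :=
        Set.ncard_le_ncard_of_injOn _ hmaps hB.injOn_lineLabel
    _ = Nat.card α + Nat.card β - 2 := by
        rw [Set.ncard_compl, Set.ncard_pair Sum.inl_ne_inr, Nat.card_sum]

end IsLineTransitive

def crossWithoutCenter (a : α) (b : β) : Set (α × β) := {a} ×ˢ {b}ᶜ ∪ {a}ᶜ ×ˢ {b}

theorem isLineTransitive_crossWithoutCenter (a : α) (b : β) :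
    IsLineTransitive (crossWithoutCenter a b) := by
  rintro ⟨u₁, u₂⟩ hu ⟨v₁, v₂⟩ hv ⟨w₁, w₂⟩ hw
  simp only [crossWithoutCenter, OnCommonLine, Set.mem_union, Set.mem_prod, Set.mem_singleton_iff,
    Set.mem_compl_iff] at *
  grind

theorem ncard_crossWithoutCenter [Finite α] [Finite β] (a : α) (b : β) :
    (crossWithoutCenter a b).ncard = Nat.card α + Nat.card β - 2 := by
  have hdisj : Disjoint ({a} ×ˢ {b}ᶜ : Set (α × β)) ({a}ᶜ ×ˢ {b}) :=
    Set.disjoint_prod.2 (.inl disjoint_compl_right)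
  have : Nonempty α := ⟨a⟩
  have : Nonempty β := ⟨b⟩
  have := Nat.card_pos (α := α)
  have := Nat.card_pos (α := β)
  rw [crossWithoutCenter, Set.ncard_union_eq hdisj, Set.ncard_prod, Set.ncard_prod,
    Set.ncard_compl, Set.ncard_compl, Set.ncard_singleton, Set.ncard_singleton]
  omega

theorem eta_boxProd_top [Finite α] [Finite β] (hα : 2 ≤ Nat.card α) (hβ : 2 ≤ Nat.card β) :
    ((⊤ : SimpleGraph α) □ (⊤ : SimpleGraph β)).eta = Nat.card α + Nat.card β - 2 := by
  obtain ⟨a⟩ : Nonempty α := (Nat.card_pos_iff.1 (by omega)).1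
  obtain ⟨b⟩ : Nonempty β := (Nat.card_pos_iff.1 (by omega)).1
  refine IsGreatest.csSup_eq ⟨⟨crossWithoutCenter a b, ?_, (ncard_crossWithoutCenter a b).symm⟩, ?_⟩
  · exact isCompleteMultipartite'_induce_compl_boxProd_top_iff.2
      (isLineTransitive_crossWithoutCenter a b)
  · rintro _ ⟨B, hB, rfl⟩
    exact (isCompleteMultipartite'_induce_compl_boxProd_top_iff.1 hB).ncard_le hα hβ

end SimpleGraph

/-- If `n₁, n₂ ≥ 2`, then `η(K_{n₁} □ K_{n₂}) = n₁ + n₂ - 2`: the maximum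
order of an induced complete multipartite subgraph of the complement of
`K_{n₁} □ K_{n₂}` equals `n₁ + n₂ - 2`. -/
theorem eta_boxProd_complete (n₁ n₂ : ℕ) (h₁ : 2 ≤ n₁) (h₂ : 2 ≤ n₂) :
    ((⊤ : SimpleGraph (Fin n₁)) □ (⊤ : SimpleGraph (Fin n₂))).eta
      = n₁ + n₂ - 2 := by
  simpa using SimpleGraph.eta_boxProd_top (α := Fin n₁) (β := Fin n₂) (by simpa) (by simpa)
end
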